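/- arXiv:cs/0010036 — 6 statements merged into one kernel-verified Lean document; each statement's English description precedes it below -/
import Mathlib

section
/- If the total number of cards n is a multiple of the number of players p, then the Game of Cards terminates: there is no infinite sequence of legal moves from any configuration. -/
/-- One step of the Game of Cards: player `i` gives a card to player `i+1` (mod `p`). -/
def step (p : ℕ) [NeZero p] (a : Fin p → ℕ) (i : Fin p) : Fin p → ℕ :=
  Function.update (Function.update a i (a i - 1)) (i + 1) (a (i + 1) + 1)

/-- The move at position `i` is legal iff the right neighbour has strictly fewer cards. -/
def legal (p : ℕ) [NeZero p] (a : Fin p → ℕ) (i : Fin p) : Prop := a (i + 1) < a i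

/-- The move relation of the Game of Cards. -/
def Move (p : ℕ) [NeZero p] (a b : Fin p → ℕ) : Prop :=
  ∃ i : Fin p, legal p a i ∧ b = step p a i

/-- `playList p a L b` : playing the (legal) moves recorded in the list `L` of positions,
starting from `a`, ends in `b`. -/
def playList (p : ℕ) [NeZero p] : (Fin p → ℕ) → List (Fin p) → (Fin p → ℕ) → Prop
  | a, [], b => b = a
  | a, i :: L, b => legal p a i ∧ playList p (step p a i) L b

/-- `dvec p a b j` is the `j`-th prefix-sum difference `(a_0+⋯+a_j) - (b_0+⋯+b_j)`. -/
def dvec (p : ℕ) (a b : Fin p → ℕ) (j : Fin p) : ℤ :=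
  ∑ i ∈ Finset.univ.filter (· ≤ j), ((a i : ℤ) - (b i : ℤ))

/-- A configuration is dual iff `p ∤ n` and every entry is `k` or `k+1` where `k = n / p`. -/
def Dual (p n : ℕ) (a : Fin p → ℕ) : Prop :=
  ¬ p ∣ n ∧ ∀ i, a i = n / p ∨ a i = n / p + 1

/-- The last index of `Fin p` (the `p`-th player). -/
def lastIdx (p : ℕ) [NeZero p] : Fin p :=
  ⟨p - 1, Nat.sub_lt (Nat.pos_of_ne_zero (NeZero.ne p)) Nat.one_pos⟩

/-- The list of configurations visited when playing the moves in `L` from `a`. -/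
def trace (p : ℕ) [NeZero p] : (Fin p → ℕ) → List (Fin p) → List (Fin p → ℕ)
  | a, [] => [a]
  | a, i :: L => a :: trace p (step p a i) L

section GC
variable {p : ℕ} [NeZero p]

lemma succ_ne (hp : 1 < p) (i : Fin p) : i + 1 ≠ i := by
  intro e
  have h1 : (1 : Fin p) = 0 := add_left_cancel (a := i) (b := 1) (c := 0) (by simpa using e)
  rw [Fin.one_eq_zero_iff] at h1; omega

lemma sub_one_val (x : Fin p) (hx : 1 ≤ x.val) : (x - 1).val = x.val - 1 := by
  have hlt : x.val < p := x.isLt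
  have h1p : (1:ℕ) % p = 1 := Nat.mod_eq_of_lt (by omega)
  rw [Fin.sub_def]
  show (p - (1:Fin p).val + x.val) % p = x.val - 1
  rw [Fin.val_one', h1p]
  have h2 : p - 1 + x.val = p + (x.val - 1) := by omega
  rw [h2, Nat.add_mod_left, Nat.mod_eq_of_lt (by omega)]

lemma add_one_val (x : Fin p) (hx : x.val + 1 < p) : (x + 1).val = x.val + 1 := by
  have h1 : (1:ℕ) % p = 1 := Nat.mod_eq_of_lt (by omega)
  rw [Fin.val_add, Fin.val_one', h1, Nat.mod_eq_of_lt hx]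

lemma neg_one_val (hp : 1 < p) : ((0 : Fin p) - 1).val = p - 1 := by
  rw [Fin.sub_def]
  show (p - (1:Fin p).val + (0:Fin p).val) % p = p - 1
  have h1 : (1:ℕ) % p = 1 := Nat.mod_eq_of_lt (by omega)
  rw [Fin.val_one', Fin.val_zero, h1, Nat.add_zero, Nat.mod_eq_of_lt (by omega)]

lemma step_self (a : Fin p → ℕ) (i : Fin p) (h : i + 1 ≠ i) : step p a i i = a i - 1 := by
  unfold step
  rw [Function.update_of_ne (fun e => h e.symm), Function.update_self]

lemma step_succ (a : Fin p → ℕ) (i : Fin p) : step p a i (i + 1) = a (i + 1) + 1 :=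
  Function.update_self _ _ _

lemma step_other (a : Fin p → ℕ) (i k : Fin p) (h1 : k ≠ i) (h2 : k ≠ i + 1) :
    step p a i k = a k := by
  unfold step
  rw [Function.update_of_ne h2, Function.update_of_ne h1]

omit [NeZero p] in
lemma sum_swap_aux (F G : Fin p → ℕ) (i j : Fin p) (hij : i ≠ j)
    (h : ∀ k, k ≠ i → k ≠ j → F k = G k) :
    (∑ k, F k) + (G i + G j) = (∑ k, G k) + (F i + F j) := by
  classical
  have hi : i ∈ Finset.univ (α := Fin p) := Finset.mem_univ i
  have hj : j ∈ (Finset.univ (α := Fin p)).erase i := by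
    simp [Finset.mem_erase, hij.symm]
  have hF := (Finset.add_sum_erase _ F hi).symm
  have hF2 := (Finset.add_sum_erase _ F hj).symm
  have hG := (Finset.add_sum_erase _ G hi).symm
  have hG2 := (Finset.add_sum_erase _ G hj).symm
  have hrest : ∑ k ∈ (Finset.univ.erase i).erase j, F k
      = ∑ k ∈ (Finset.univ.erase i).erase j, G k := by
    apply Finset.sum_congr rfl
    intro k hk
    simp only [Finset.mem_erase] at hk
    exact h k hk.2.1 hk.1
  rw [hF, hF2, hG, hG2, hrest]; ring

lemma sum_mul_step (g a : Fin p → ℕ) (i : Fin p) (hp : 1 < p) (hleg : legal p a i) :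
    (∑ k, g k * step p a i k) + g i = (∑ k, g k * a k) + g (i + 1) := by
  have hne := succ_ne hp i
  have key := sum_swap_aux (fun k => g k * step p a i k) (fun k => g k * a k) i (i+1)
    (fun e => hne e.symm)
    (fun k h1 h2 => by simp only [step_other a i k h1 h2])
  simp only [step_self a i hne, step_succ a i] at key
  obtain ⟨A, hA⟩ : ∃ A, a i = A + 1 := ⟨a i - 1, by have := hleg; unfold legal at this; omega⟩
  rw [hA] at key
  simp only [Nat.add_sub_cancel] at key
  have e1 : g i * (A + 1) = g i * A + g i := by ring
  have e2 : g (i+1) * (a (i+1) + 1) = g (i+1) * a (i+1) + g (i+1) := by ring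
  rw [e1, e2] at key
  omega

lemma sq_step (a : Fin p → ℕ) (i : Fin p) (hp : 1 < p) (hleg : legal p a i) :
    (∑ k, (step p a i k)^2) ≤ ∑ k, (a k)^2 ∧
    ((∑ k, (step p a i k)^2) = (∑ k, (a k)^2) → a (i+1) + 1 = a i) := by
  have hne := succ_ne hp i
  have key := sum_swap_aux (fun k => (step p a i k)^2) (fun k => (a k)^2) i (i+1)
    (fun e => hne e.symm)
    (fun k h1 h2 => by simp only [step_other a i k h1 h2])
  simp only [step_self a i hne, step_succ a i] at key
  obtain ⟨A, hA⟩ : ∃ A, a i = A + 1 := ⟨a i - 1, by have := hleg; unfold legal at this; omega⟩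
  have hd : a (i+1) ≤ A := by have := hleg; unfold legal at this; omega
  rw [hA] at key
  simp only [Nat.add_sub_cancel] at key
  constructor
  · nlinarith [key, hd]
  · intro he
    rw [he] at key
    nlinarith [key, hd]

/-- min token -/
def tokQ (p : ℕ) [NeZero p] (mi : ℕ → Fin p) (T : ℕ) (j0 : Fin p) : ℕ → Fin p
  | 0 => j0
  | s+1 => if mi (T + s) = tokQ p mi T j0 s - 1 then tokQ p mi T j0 s - 1 else tokQ p mi T j0 s

/-- max token -/
def tokR (p : ℕ) [NeZero p] (mi : ℕ → Fin p) (T : ℕ) (j0 : Fin p) : ℕ → Fin p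
  | 0 => j0
  | s+1 => if mi (T + s) = tokR p mi T j0 s then tokR p mi T j0 s + 1 else tokR p mi T j0 s

end GC

/-- If the number of cards is a multiple of the number of players, the game terminates:
there is no infinite sequence of legal moves from any configuration. -/
theorem stmt0 (p n : ℕ) [NeZero p] (h : p ∣ n) :
    ¬ ∃ f : ℕ → Fin p → ℕ, (∑ i, f 0 i = n) ∧ ∀ t, Move p (f t) (f (t + 1)) := by
  rintro ⟨f, hn, hmove⟩
  choose mi hleg hstep using hmove
  -- p ≥ 2
  have hp : 1 < p := by
    by_contra hc
    have hp1 : p = 1 := by have := NeZero.ne p; omega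
    have : mi 0 + 1 = mi 0 := by subst hp1; exact Subsingleton.elim _ _
    have h0 := hleg 0
    unfold legal at h0
    rw [this] at h0
    exact lt_irrefl _ h0
  have hnsucc : ∀ i : Fin p, i + 1 ≠ i := succ_ne hp
  -- sum invariant
  have hsum : ∀ t, ∑ k, f t k = n := by
    intro t
    induction t with
    | zero => exact hn
    | succ t ih =>
      have key := sum_mul_step (fun _ => 1) (f t) (mi t) hp (hleg t)
      simp only [one_mul] at key
      rw [hstep t]
      omega
  -- every position fires infinitely often
  have fires : ∀ (j : Fin p) (N : ℕ), ∃ t, N ≤ t ∧ mi t = j := by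
    intro j N
    by_contra hc
    push_neg at hc
    set w : Fin p → ℕ := fun k => (k - j - 1).val with hw
    have hwle : ∀ k, w k ≤ p - 1 := fun k => by
      simp only [hw]; have := (k - j - 1).isLt; omega
    have hwstep : ∀ i : Fin p, i ≠ j → w (i + 1) = w i + 1 := by
      intro i hij
      have hix : (i - j - 1).val ≠ p - 1 := by
        intro hx
        apply hij
        have : i - j - 1 = 0 - 1 := Fin.ext (by rw [hx, neg_one_val hp])
        have h2 : i - j = 0 := by
          have := sub_left_injective (G := Fin p) (b := 1) this
          simpa using this
        have := sub_eq_zero.mp h2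
        exact this
      have hlt : (i - j - 1).val + 1 < p := by
        have := (i - j - 1).isLt; omega
      have e1 : i + 1 - j - 1 = (i - j - 1) + 1 := by abel
      rw [hw]
      simp only
      rw [e1, add_one_val _ hlt]
    have hWbound : ∀ t, (∑ k, w k * f t k) ≤ (p - 1) * n := by
      intro t
      calc (∑ k, w k * f t k) ≤ ∑ k, (p-1) * f t k :=
            Finset.sum_le_sum (fun k _ => Nat.mul_le_mul_right _ (hwle k))
        _ = (p-1) * ∑ k, f t k := by rw [Finset.mul_sum]
        _ = (p-1) * n := by rw [hsum]
    have hWgrow : ∀ s, (∑ k, w k * f N k) + s ≤ ∑ k, w k * f (N + s) k := by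
      intro s
      induction s with
      | zero => simp
      | succ s ih =>
        have hij : mi (N + s) ≠ j := hc (N + s) (Nat.le_add_right _ _)
        have key := sum_mul_step w (f (N + s)) (mi (N + s)) hp (hleg (N + s))
        rw [hwstep _ hij] at key
        have : N + (s + 1) = (N + s) + 1 := rfl
        rw [this, hstep (N + s)]
        omega
    have h1 := hWgrow ((p - 1) * n + 1)
    have h2 := hWbound (N + ((p - 1) * n + 1))
    omega
  -- sum of squares
  set sq : ℕ → ℕ := fun t => ∑ k, (f t k)^2 with hsq
  have hanti : ∀ t, sq (t + 1) ≤ sq t := by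
    intro t
    have := (sq_step (f t) (mi t) hp (hleg t)).1
    rw [hsq]; simp only
    rw [hstep t]
    exact this
  have hmono : ∀ s t, s ≤ t → sq t ≤ sq s := by
    intro s t hst
    induction t, hst using Nat.le_induction with
    | base => exact le_refl _
    | succ t hst ih => exact le_trans (hanti t) ih
  obtain ⟨T, hTmin⟩ : ∃ T, ∀ t, sq T ≤ sq t := by
    obtain ⟨T, hT⟩ := Nat.sInf_mem (s := Set.range sq) ⟨sq 0, 0, rfl⟩
    exact ⟨T, fun t => by rw [hT]; exact Nat.sInf_le ⟨t, rfl⟩⟩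
  have hconst : ∀ t, T ≤ t → sq t = sq T :=
    fun t ht => le_antisymm (hmono T t ht) (hTmin t)
  -- swap property after T
  have hswap : ∀ t, T ≤ t → f t (mi t + 1) + 1 = f t (mi t) := by
    intro t ht
    apply (sq_step (f t) (mi t) hp (hleg t)).2
    have h1 : sq (t+1) = sq T := hconst (t+1) (le_trans ht (Nat.le_succ t))
    have h2 : sq t = sq T := hconst t ht
    rw [hsq] at h1 h2
    simp only at h1 h2
    rw [hstep t] at h1
    rw [h1, h2]
  -- min and max at time T
  obtain ⟨jm, _, hjm⟩ := Finset.exists_min_image Finset.univ (f T) ⟨0, Finset.mem_univ 0⟩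
  obtain ⟨jM, _, hjM⟩ := Finset.exists_max_image Finset.univ (f T) ⟨0, Finset.mem_univ 0⟩
  set m := f T jm with hm
  set M := f T jM with hM
  have hmM : m < M := by
    have h1 := hleg T
    unfold legal at h1
    have h2 := hjm (mi T + 1) (Finset.mem_univ _)
    have h3 := hjM (mi T) (Finset.mem_univ _)
    omega
  -- bounds preserved
  have hbounds : ∀ t, T ≤ t → ∀ k, m ≤ f t k ∧ f t k ≤ M := by
    intro t ht
    induction t, ht using Nat.le_induction with
    | base => exact fun k => ⟨hjm k (Finset.mem_univ k), hjM k (Finset.mem_univ k)⟩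
    | succ t ht ih =>
      intro k
      have hsw := hswap t ht
      rw [hstep t]
      rcases eq_or_ne k (mi t + 1) with rfl | hk1
      · rw [step_succ]
        have := ih (mi t)
        omega
      · rcases eq_or_ne k (mi t) with rfl | hk2
        · rw [step_self _ _ (hnsucc _)]
          have := ih (mi t + 1)
          omega
        · rw [step_other _ _ _ hk2 hk1]
          exact ih k
  -- case M = m + 1 : divisibility contradiction
  rcases Nat.lt_or_ge (m + 1) M with hM2 | hM1
  swap
  · -- M = m + 1
    have hMeq : M = m + 1 := by omega
    set c := ∑ k, (f T k - m) with hc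
    have hterm : ∀ k, f T k - m ≤ 1 := by
      intro k
      have h1 := hjM k (Finset.mem_univ k)
      omega
    have hnc : n = p * m + c := by
      have : ∑ k, f T k = ∑ k, ((f T k - m) + m) := by
        apply Finset.sum_congr rfl
        intro k _
        have := hjm k (Finset.mem_univ k)
        omega
      rw [hsum T] at this
      rw [Finset.sum_add_distrib, Finset.sum_const, Finset.card_univ] at this
      simp [Fintype.card_fin, mul_comm] at this
      omega
    have hc1 : 1 ≤ c := by
      have h1 := Finset.single_le_sum (f := fun k => f T k - m)
        (fun k _ => Nat.zero_le _) (Finset.mem_univ jM)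
      rw [← hc] at h1
      omega
    have hcp : c ≤ p - 1 := by
      have hsplit := Finset.add_sum_erase Finset.univ (fun k => f T k - m) (Finset.mem_univ jm)
      have hrest : ∑ k ∈ Finset.univ.erase jm, (f T k - m) ≤ (Finset.univ.erase jm).card * 1 := by
        apply Finset.sum_le_card_nsmul
        intro k _
        exact hterm k
      rw [Finset.card_erase_of_mem (Finset.mem_univ jm), Finset.card_univ, Fintype.card_fin] at hrest
      have hjm0 : f T jm - m = 0 := by omega
      have hceq : c = (f T jm - m) + ∑ k ∈ Finset.univ.erase jm, (f T k - m) := by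
        rw [hc, hsplit]
      omega
    have hdc : p ∣ c := by
      have : c = n - p * m := by omega
      rw [this]
      exact Nat.dvd_sub h (Dvd.intro m rfl)
    have := Nat.le_of_dvd (by omega) hdc
    omega
  · -- M ≥ m + 2 : token argument
    set Q := tokQ p mi T jm with hQdef
    set R := tokR p mi T jM with hRdef
    have hQ : ∀ s, f (T + s) (Q s) = m := by
      intro s
      induction s with
      | zero => simp [hQdef, tokQ, hm]
      | succ s ih =>
        have ht : T ≤ T + s := Nat.le_add_right _ _
        have hsw := hswap (T + s) ht
        have hstep' : f (T + s + 1) = step p (f (T + s)) (mi (T + s)) := hstep (T + s)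
        have hTs : T + (s + 1) = (T + s) + 1 := rfl
        rw [hQdef]
        show f _ (tokQ p mi T jm (s+1)) = m
        rw [tokQ]
        rcases eq_or_ne (mi (T + s)) (tokQ p mi T jm s - 1) with he | he
        · rw [if_pos he, hTs, hstep', ← he, step_self _ _ (hnsucc _)]
          have hplus : mi (T + s) + 1 = tokQ p mi T jm s := by
            rw [he]; exact sub_add_cancel _ _
          rw [hplus] at hsw
          have := ih
          rw [hQdef] at this
          omega
        · rw [if_neg he, hTs, hstep']
          have hki : tokQ p mi T jm s ≠ mi (T + s) := by
            intro e
            have hl := hleg (T + s)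
            unfold legal at hl
            rw [← e] at hl
            have hb := (hbounds (T + s) ht (tokQ p mi T jm s + 1)).1
            have := ih
            rw [hQdef] at this
            omega
          have hki1 : tokQ p mi T jm s ≠ mi (T + s) + 1 := by
            intro e
            apply he
            rw [e]
            simp
          rw [step_other _ _ _ hki hki1]
          have := ih
          rw [hQdef] at this
          exact this
    have hR : ∀ s, f (T + s) (R s) = M := by
      intro s
      induction s with
      | zero => simp [hRdef, tokR, hM]
      | succ s ih =>
        have ht : T ≤ T + s := Nat.le_add_right _ _
        have hsw := hswap (T + s) ht
        have hstep' : f (T + s + 1) = step p (f (T + s)) (mi (T + s)) := hstep (T + s)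
        have hTs : T + (s + 1) = (T + s) + 1 := rfl
        have ihs := ih
        rw [hRdef] at ihs
        rw [hRdef]
        show f _ (tokR p mi T jM (s+1)) = M
        rw [tokR]
        rcases eq_or_ne (mi (T + s)) (tokR p mi T jM s) with he | he
        · rw [if_pos he, hTs, hstep', ← he, step_succ]
          rw [hsw, he]
          exact ihs
        · rw [if_neg he, hTs, hstep']
          have hki : tokR p mi T jM s ≠ mi (T + s) := fun e => he e.symm
          have hki1 : tokR p mi T jM s ≠ mi (T + s) + 1 := by
            intro e
            have hb := (hbounds (T + s) ht (mi (T + s))).2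
            rw [e] at ihs
            omega
          rw [step_other _ _ _ hki hki1]
          exact ihs
    have hQR : ∀ s, Q s ≠ R s := by
      intro s e
      have h1 := hQ s
      rw [e, hR s] at h1
      omega
    have hdpos : ∀ s, 1 ≤ (Q s - R s).val := by
      intro s
      by_contra hcon
      apply hQR s
      have h0 : (Q s - R s).val = 0 := by omega
      have : Q s - R s = 0 := Fin.ext (by simpa using h0)
      exact sub_eq_zero.mp this
    have hnotadj : ∀ s, mi (T + s) = R s → Q s ≠ R s + 1 := by
      intro s he hadj
      have hsw := hswap (T + s) (Nat.le_add_right _ _)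
      rw [he] at hsw
      have h1 := hQ s
      rw [hadj] at h1
      have h2 := hR s
      omega
    have hstepD : ∀ s, ((Q (s+1) - R (s+1)).val ≤ (Q s - R s).val) ∧
        (mi (T + s) = R s → (Q (s+1) - R (s+1)).val + 1 = (Q s - R s).val) := by
      intro s
      rcases eq_or_ne (mi (T + s)) (R s) with he | he
      · have hQs : Q (s+1) = Q s := by
          rw [hQdef]
          show tokQ p mi T jm (s+1) = tokQ p mi T jm s
          rw [tokQ, if_neg]
          intro e
          rw [← hQdef] at e
          exact hnotadj s he (sub_eq_iff_eq_add.mp (he ▸ e.symm))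
        have hRs : R (s+1) = R s + 1 := by
          rw [hRdef]
          show tokR p mi T jM (s+1) = tokR p mi T jM s + 1
          rw [tokR, if_pos]
          rw [← hRdef]
          exact he
        have hd : Q (s+1) - R (s+1) = (Q s - R s) - 1 := by rw [hQs, hRs]; abel
        have h1 := hdpos s
        rw [hd, sub_one_val _ h1]
        exact ⟨by omega, fun _ => by omega⟩
      · have hRs : R (s+1) = R s := by
          rw [hRdef]
          show tokR p mi T jM (s+1) = tokR p mi T jM s
          rw [tokR, if_neg]
          rw [← hRdef]
          exact he
        rcases eq_or_ne (mi (T + s)) (Q s - 1) with he2 | he2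
        · have hQs : Q (s+1) = Q s - 1 := by
            rw [hQdef]
            show tokQ p mi T jm (s+1) = tokQ p mi T jm s - 1
            rw [tokQ, if_pos]
            rw [← hQdef]
            exact he2
          have hd : Q (s+1) - R (s+1) = (Q s - R s) - 1 := by rw [hQs, hRs]; abel
          have h1 := hdpos s
          rw [hd, sub_one_val _ h1]
          exact ⟨by omega, fun hc => absurd hc he⟩
        · have hQs : Q (s+1) = Q s := by
            rw [hQdef]
            show tokQ p mi T jm (s+1) = tokQ p mi T jm s
            rw [tokQ, if_neg]
            rw [← hQdef]
            exact he2
          rw [hQs, hRs]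
          exact ⟨le_refl _, fun hc => absurd hc he⟩
    have hdanti : ∀ s s', s ≤ s' → (Q s' - R s').val ≤ (Q s - R s).val := by
      intro s s' hss
      induction s', hss using Nat.le_induction with
      | base => exact le_refl _
      | succ s' hss ih => exact le_trans (hstepD s').1 ih
    have Rfires : ∀ s0, ∃ s, s0 ≤ s ∧ mi (T + s) = R s := by
      intro s0
      by_contra hcon
      push_neg at hcon
      have hRconst : ∀ s, s0 ≤ s → R s = R s0 := by
        intro s hs
        induction s, hs using Nat.le_induction with
        | base => rfl
        | succ s hs ih =>
          have hne := hcon s hs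
          rw [ih] at hne
          have : R (s+1) = R s := by
            rw [hRdef]
            show tokR p mi T jM (s+1) = tokR p mi T jM s
            rw [tokR, if_neg]
            rw [← hRdef, ih]
            exact hne
          rw [this, ih]
      obtain ⟨t, ht1, ht2⟩ := fires (R s0) (T + s0)
      apply hcon (t - T) (by omega)
      have htt : T + (t - T) = t := by omega
      rw [htt, ht2, hRconst (t - T) (by omega)]
    have hdec : ∀ k, ∃ s, (Q s - R s).val + k ≤ (Q 0 - R 0).val := by
      intro k
      induction k with
      | zero => exact ⟨0, by omega⟩
      | succ k ih =>
        obtain ⟨s, hs⟩ := ih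
        obtain ⟨s', hs1, hs2⟩ := Rfires s
        have h3 := (hstepD s').2 hs2
        have h4 := hdanti s s' hs1
        exact ⟨s' + 1, by omega⟩
    obtain ⟨s, hs⟩ := hdec ((Q 0 - R 0).val)
    have h1 := hdpos s
    have h2 := hdpos 0
    omega
end

section
/- If 0 < q < p, the set of dual configurations (entries all equal to k or k+1, summing to n = kp+q) forms a strongly connected subgraph of the move graph: for any two dual configurations a and b, there is a sequence of legal moves from a to b. -/
namespace Stmt4Aux

open Fin.NatCast Fin.CommRing

variable (p : ℕ) [NeZero p]

/-- prefix sums of differences, with indices read mod `p`. -/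
def DD (a b : Fin p → ℕ) : ℕ → ℤ :=
  fun r => ∑ i ∈ Finset.range r, ((a (i : Fin p) : ℤ) - (b (i : Fin p) : ℤ))

lemma DD_zero (a b : Fin p → ℕ) : DD p a b 0 = 0 := by simp [DD]

lemma DD_succ (a b : Fin p → ℕ) (r : ℕ) :
    DD p a b (r + 1) = DD p a b r + ((a (r : Fin p) : ℤ) - (b (r : Fin p) : ℤ)) :=
  Finset.sum_range_succ _ _

lemma DD_p (a b : Fin p → ℕ) (hab : ∑ i, a i = ∑ i, b i) : DD p a b p = 0 := by
  have h1 : DD p a b p = ∑ i : Fin p, ((a i : ℤ) - (b i : ℤ)) := by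
    rw [DD, ← Fin.sum_univ_eq_sum_range (fun i => ((a (i : Fin p) : ℤ) - (b (i : Fin p) : ℤ))) p]
    simp
  rw [h1, Finset.sum_sub_distrib]
  have : ((∑ i, a i : ℕ) : ℤ) = ((∑ i, b i : ℕ) : ℤ) := by exact_mod_cast hab
  push_cast at this
  omega

lemma DD_add_p (a b : Fin p → ℕ) (hab : ∑ i, a i = ∑ i, b i) (r : ℕ) :
    DD p a b (r + p) = DD p a b r := by
  induction r with
  | zero => simpa [DD_zero] using DD_p p a b hab
  | succ n ih =>
    have h1 : n + 1 + p = (n + p) + 1 := by omega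
    have h2 : ((n + p : ℕ) : Fin p) = (n : Fin p) := by push_cast; simp
    rw [h1, DD_succ, ih, h2, ← DD_succ]

lemma DD_add_mul (a b : Fin p → ℕ) (hab : ∑ i, a i = ∑ i, b i) (r c : ℕ) :
    DD p a b (r + c * p) = DD p a b r := by
  induction c with
  | zero => simp
  | succ n ih =>
    have : r + (n + 1) * p = (r + n * p) + p := by ring
    rw [this, DD_add_p p a b hab, ih]

lemma Icc_ne : (Finset.Icc 1 p).Nonempty :=
  ⟨p, by rw [Finset.mem_Icc]; exact ⟨Nat.one_le_iff_ne_zero.2 (NeZero.ne p), le_rfl⟩⟩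

/-- minimum of the prefix-difference values. -/
noncomputable def mv (a b : Fin p → ℕ) : ℤ :=
  ((Finset.Icc 1 p).image (DD p a b)).min' (Finset.Nonempty.image (Icc_ne p) _)

lemma mv_le (a b : Fin p → ℕ) {r : ℕ} (hr : r ∈ Finset.Icc 1 p) : mv p a b ≤ DD p a b r :=
  Finset.min'_le _ _ (Finset.mem_image_of_mem _ hr)

lemma mv_mem (a b : Fin p → ℕ) : ∃ r ∈ Finset.Icc 1 p, DD p a b r = mv p a b := by
  have := Finset.min'_mem ((Finset.Icc 1 p).image (DD p a b)) (Finset.Nonempty.image (Icc_ne p) _)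
  rw [Finset.mem_image] at this
  exact this

lemma le_mv (a b : Fin p → ℕ) {c : ℤ} (h : ∀ r ∈ Finset.Icc 1 p, c ≤ DD p a b r) :
    c ≤ mv p a b := by
  apply Finset.le_min'
  intro y hy
  rw [Finset.mem_image] at hy
  obtain ⟨r, hr, rfl⟩ := hy
  exact h r hr

/-- the potential. -/
noncomputable def Phi (a b : Fin p → ℕ) : ℕ :=
  (∑ r ∈ Finset.Icc 1 p, DD p a b r - p * mv p a b).toNat

lemma Phi_int (a b : Fin p → ℕ) :
    (Phi p a b : ℤ) = ∑ r ∈ Finset.Icc 1 p, DD p a b r - p * mv p a b := by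
  apply Int.toNat_of_nonneg
  have h1 : ∑ r ∈ Finset.Icc 1 p, DD p a b r - p * mv p a b
      = ∑ r ∈ Finset.Icc 1 p, (DD p a b r - mv p a b) := by
    rw [Finset.sum_sub_distrib, Finset.sum_const, Nat.card_Icc]
    simp
  rw [h1]
  exact Finset.sum_nonneg fun r hr => by have := mv_le p a b hr; omega

lemma sum_step (a : Fin p → ℕ) (τ : Fin p) (hτ : a (τ + 1) < a τ) :
    ∑ i, step p a τ i = ∑ i, a i := by
  have hne : τ + 1 ≠ τ := by
    intro h
    rw [h] at hτ
    exact lt_irrefl _ hτ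
  have hmem : τ ∈ Finset.univ.erase (τ + 1) :=
    Finset.mem_erase.2 ⟨fun h => hne h.symm, Finset.mem_univ _⟩
  have h2 : ∑ x, a x = a (τ + 1) + ∑ x ∈ Finset.univ.erase (τ + 1), a x :=
    (Finset.add_sum_erase _ a (Finset.mem_univ _)).symm
  have h3 : ∑ x ∈ Finset.univ.erase (τ + 1), a x
      = a τ + ∑ x ∈ (Finset.univ.erase (τ + 1)).erase τ, a x :=
    (Finset.add_sum_erase _ a hmem).symm
  rw [step, Finset.sum_update_of_mem (Finset.mem_univ _), Finset.sdiff_singleton_eq_erase,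
    Finset.sum_update_of_mem hmem, Finset.sdiff_singleton_eq_erase]
  omega


lemma key (k q : ℕ) (hq : 0 < q) (hqp : q < p) (a b : Fin p → ℕ)
    (ha : ∀ i, a i = k ∨ a i = k + 1) (ha' : ∑ i, a i = k * p + q)
    (hb : ∀ i, b i = k ∨ b i = k + 1) (hb' : ∑ i, b i = k * p + q)
    (hne : a ≠ b) :
    ∃ τ : Fin p, legal p a τ ∧ (∀ i, step p a τ i = k ∨ step p a τ i = k + 1)
      ∧ (∑ i, step p a τ i = k * p + q) ∧ Phi p (step p a τ) b + 1 = Phi p a b := by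
  have hp1 : 1 ≤ p := Nat.one_le_iff_ne_zero.2 (NeZero.ne p)
  have hp2 : 2 ≤ p := by omega
  have hab : ∑ i, a i = ∑ i, b i := ha'.trans hb'.symm
  set D := DD p a b with hD
  have hDp : D p = 0 := DD_p p a b hab
  -- maximum
  obtain ⟨rM, hrM, hMmax⟩ := Finset.exists_max_image (Finset.Icc 1 p) D (Icc_ne p)
  set M := D rM with hMdef
  have hDle : ∀ r, 1 ≤ r → D r ≤ M := by
    intro r hr
    obtain ⟨u, hu⟩ : ∃ u, r - 1 = (r - 1) % p + u * p := ⟨(r - 1) / p, (Nat.mod_add_div' _ _).symm⟩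
    have hmlt : (r - 1) % p < p := Nat.mod_lt _ (by omega)
    have hr' : r = ((r - 1) % p + 1) + u * p := by omega
    have h2 := DD_add_mul p a b hab ((r - 1) % p + 1) u
    rw [hr', hD, h2]
    exact hMmax _ (Finset.mem_Icc.2 ⟨by omega, by omega⟩)
  have hpIcc : p ∈ Finset.Icc 1 p := Finset.mem_Icc.2 ⟨hp1, le_rfl⟩
  have hM0 : 0 ≤ M := hDp ▸ hMmax p hpIcc
  -- minimum
  obtain ⟨rm, hrm, hmval⟩ := mv_mem p a b
  rw [← hD] at hmval
  set m := mv p a b with hmdef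
  have hmmin : ∀ r ∈ Finset.Icc 1 p, m ≤ D r := fun r hr => mv_le p a b hr
  have hm0 : m ≤ 0 := hDp ▸ hmmin p hpIcc
  have hmM : m < M := by
    rcases lt_or_eq_of_le (hmmin rM hrM) with h | h
    · exact h
    · exfalso
      apply hne
      have hall : ∀ r ∈ Finset.Icc 1 p, D r = 0 := by
        intro r hr
        have h1 := hmmin r hr
        have h2 := hMmax r hr
        have h3 := hmmin p hpIcc
        have h4 := hMmax p hpIcc
        omega
      funext j
      have h1 : D (j.val + 1) = 0 := hall _ (Finset.mem_Icc.2 ⟨by omega, j.isLt⟩)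
      have h2 : D j.val = 0 := by
        rcases Nat.eq_zero_or_pos j.val with h | h
        · rw [h]; exact DD_zero p a b
        · exact hall _ (Finset.mem_Icc.2 ⟨h, le_of_lt j.isLt⟩)
      have h3 := DD_succ p a b j.val
      rw [Fin.cast_val_eq_self] at h3
      rw [← hD] at h3
      have : (a j : ℤ) = (b j : ℤ) := by omega
      exact_mod_cast this
  have hrm1 : 1 ≤ rm := (Finset.mem_Icc.1 hrm).1
  have hrmp : rm ≤ p := (Finset.mem_Icc.1 hrm).2
  have hrM1 : 1 ≤ rM := (Finset.mem_Icc.1 hrM).1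
  have hrMp : rM ≤ p := (Finset.mem_Icc.1 hrM).2
  -- plateau start
  set T := (Finset.Icc rm (rM + p)).filter (fun j => D j < M) with hT
  have hrmT : rm ∈ T := by
    rw [hT, Finset.mem_filter, Finset.mem_Icc]
    exact ⟨⟨le_rfl, by omega⟩, hmval.trans_lt hmM⟩
  set i := T.max' ⟨rm, hrmT⟩ with hi
  have hiT := T.max'_mem ⟨rm, hrmT⟩
  rw [← hi, hT, Finset.mem_filter, Finset.mem_Icc] at hiT
  obtain ⟨⟨hirm, hirM⟩, hiM⟩ := hiT
  have hi1 : 1 ≤ i := le_trans hrm1 hirm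
  have hiltr0 : i < rM + p := by
    rcases lt_or_eq_of_le hirM with h | h
    · exact h
    · exfalso
      have h2 : D (rM + p) = M := DD_add_p p a b hab rM
      rw [h, h2] at hiM
      exact lt_irrefl _ hiM
  have hiD : D (i + 1) = M := by
    have h1 : D (i + 1) ≤ M := hDle (i + 1) (by omega)
    by_contra hcon
    have h2 : D (i + 1) < M := lt_of_le_of_ne h1 hcon
    have h3 : i + 1 ∈ T := by
      rw [hT, Finset.mem_filter, Finset.mem_Icc]
      exact ⟨⟨by omega, by omega⟩, h2⟩
    have h4 := T.le_max' _ h3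
    rw [← hi] at h4
    omega
  have hai : a ((i : Fin p)) = k + 1 := by
    have h3 := DD_succ p a b i
    rw [← hD] at h3
    have hbk : (k : ℤ) ≤ (b ((i : Fin p)) : ℤ) := by
      rcases hb ((i : Fin p)) with h | h <;> simp [h]
    rcases ha ((i : Fin p)) with h | h
    · exfalso
      rw [h] at h3
      have hbk2 : (b ((i : Fin p)) : ℤ) ≥ (k : ℤ) := hbk
      omega
    · exact h
  -- some entry equals k
  have hexk : ∃ v : Fin p, a v = k := by
    by_contra hcon
    push_neg at hcon
    have hall : ∀ v, a v = k + 1 := fun v => (ha v).resolve_left (hcon v)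
    have hsum : ∑ v, a v = k * p + p := by
      rw [Finset.sum_congr rfl fun v _ => hall v, Finset.sum_const, Finset.card_univ,
        Fintype.card_fin, smul_eq_mul]
      ring
    rw [ha'] at hsum
    omega
  obtain ⟨v, hv⟩ := hexk
  -- walk to the first k after i
  have hPex : ∃ r : ℕ, a (((i + 1 + r : ℕ)) : Fin p) = k := by
    refine ⟨(v - ((i + 1 : ℕ) : Fin p)).val, ?_⟩
    have h4 : (((i + 1 + (v - ((i + 1 : ℕ) : Fin p)).val : ℕ)) : Fin p) = v := by
      rw [Nat.cast_add, Fin.cast_val_eq_self, add_comm, sub_add_cancel]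
    rw [h4]
    exact hv
  set r' := Nat.find hPex with hr'def
  have hr'P : a (((i + 1 + r' : ℕ)) : Fin p) = k := Nat.find_spec hPex
  have hr'min : ∀ s, s < r' → a (((i + 1 + s : ℕ)) : Fin p) = k + 1 := by
    intro s hs
    rcases ha (((i + 1 + s : ℕ)) : Fin p) with h | h
    · exact absurd h (Nat.find_min hPex hs)
    · exact h
  have hplateau : ∀ s, s ≤ r' → D (i + 1 + s) = M := by
    intro s
    induction s with
    | zero => intro _; simpa using hiD
    | succ n ih =>
      intro hns
      have h1 : D (i + 1 + n) = M := ih (by omega)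
      have h2 := DD_succ p a b (i + 1 + n)
      rw [← hD] at h2
      have h3 : a (((i + 1 + n : ℕ)) : Fin p) = k + 1 := hr'min n (by omega)
      have h5 : D (i + 1 + (n + 1)) ≤ M := hDle _ (by omega)
      have h6 : i + 1 + (n + 1) = (i + 1 + n) + 1 := by omega
      rw [h6] at h5 ⊢
      rw [h3] at h2
      rcases hb (((i + 1 + n : ℕ) : Fin p)) with h | h <;>
        rw [h] at h2 <;> push_cast at h2 <;> omega
  -- the move position
  obtain ⟨t, ht1, hta, hta1, htD⟩ :
      ∃ t : ℕ, 1 ≤ t ∧ a ((t : Fin p)) = k + 1 ∧ a (((t + 1 : ℕ)) : Fin p) = k ∧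
        D (t + 1) = M := by
    rcases Nat.eq_zero_or_pos r' with h0 | h0
    · refine ⟨i, hi1, hai, ?_, hiD⟩
      have := hr'P
      rw [h0] at this
      simpa using this
    · obtain ⟨n, hn⟩ : ∃ n, r' = n + 1 := ⟨r' - 1, by omega⟩
      refine ⟨i + 1 + n, by omega, hr'min n (by omega), ?_, ?_⟩
      · have he : i + 1 + n + 1 = i + 1 + (n + 1) := by omega
        rw [he, ← hn]
        exact hr'P
      · have he : i + 1 + n + 1 = i + 1 + (n + 1) := by omega
        rw [he]
        exact hplateau (n + 1) (by omega)
  set τ : Fin p := (t : Fin p) with hτdef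
  have hcast : ((t + 1 : ℕ) : Fin p) = τ + 1 := by push_cast; ring
  have hτ1 : a τ = k + 1 := hta
  have hτ2 : a (τ + 1) = k := by rw [← hcast]; exact hta1
  have hlegal : legal p a τ := by rw [legal, hτ2, hτ1]; omega
  have hne1 : τ + 1 ≠ τ := by
    intro h
    have h2 := hlegal
    rw [legal, h] at h2
    exact lt_irrefl _ h2
  have hτne : τ ≠ τ + 1 := fun h => hne1 h.symm
  have hs1 : step p a τ τ = k := by
    rw [step, Function.update_of_ne hτne, Function.update_self, hτ1]
    omega
  have hs2 : step p a τ (τ + 1) = k + 1 := by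
    rw [step, Function.update_self, hτ2]
  have hs3 : ∀ j, j ≠ τ → j ≠ τ + 1 → step p a τ j = a j := by
    intro j h1 h2
    rw [step, Function.update_of_ne h2, Function.update_of_ne h1]
  -- D of the new configuration
  have hDstep : ∀ r, r ≤ p → DD p (step p a τ) b r
      = D r + ((if τ.val < r then (-1 : ℤ) else 0) + (if (τ + 1).val < r then (1 : ℤ) else 0)) := by
    intro r hr
    have hterm : ∀ x ∈ Finset.range r,
        ((step p a τ (x : Fin p) : ℤ) - (b (x : Fin p) : ℤ))
          = ((a (x : Fin p) : ℤ) - (b (x : Fin p) : ℤ))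
            + ((if x = τ.val then (-1 : ℤ) else 0) + (if x = (τ + 1).val then (1 : ℤ) else 0)) := by
      intro x hx
      rw [Finset.mem_range] at hx
      have hxp : x < p := lt_of_lt_of_le hx hr
      have hxv : ((x : Fin p)).val = x := by
        rw [Fin.val_natCast]; exact Nat.mod_eq_of_lt hxp
      rcases eq_or_ne x τ.val with h1 | h1
      · have hxτ : (x : Fin p) = τ := Fin.ext (by rw [hxv, h1])
        have hne2 : x ≠ (τ + 1).val := by
          intro h
          exact hne1 (Fin.ext (by omega))
        rw [hxτ, hs1, hτ1, if_pos h1, if_neg hne2]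
        push_cast; ring
      rcases eq_or_ne x (τ + 1).val with h2 | h2
      · have hxτ : (x : Fin p) = τ + 1 := Fin.ext (by rw [hxv, h2])
        rw [hxτ, hs2, hτ2, if_neg h1, if_pos h2]
        push_cast; ring
      · have hx1 : (x : Fin p) ≠ τ := fun h => h1 (by rw [← hxv, h])
        have hx2 : (x : Fin p) ≠ τ + 1 := fun h => h2 (by rw [← hxv, h])
        rw [hs3 _ hx1 hx2, if_neg h1, if_neg h2]
        ring
    have e1 : DD p (step p a τ) b r
        = ∑ x ∈ Finset.range r, (((a (x : Fin p) : ℤ) - (b (x : Fin p) : ℤ))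
            + ((if x = τ.val then (-1 : ℤ) else 0) + (if x = (τ + 1).val then (1 : ℤ) else 0))) :=
      Finset.sum_congr rfl hterm
    rw [e1, Finset.sum_add_distrib, Finset.sum_add_distrib,
      Finset.sum_ite_eq' (Finset.range r) τ.val (fun _ => (-1 : ℤ)),
      Finset.sum_ite_eq' (Finset.range r) (τ + 1).val (fun _ => (1 : ℤ))]
    simp only [Finset.mem_range]
    rfl
  have hτval : τ.val = t % p := by rw [hτdef, Fin.val_natCast]
  obtain ⟨u, hu⟩ : ∃ u, t = t % p + u * p := ⟨t / p, (Nat.mod_add_div' _ _).symm⟩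
  have hDτ1 : D (τ.val + 1) = M := by
    have h1 : t + 1 = (t % p + 1) + u * p := by omega
    have h2 := DD_add_mul p a b hab (t % p + 1) u
    rw [hτval, hD, ← h2, ← h1]
    exact htD
  have hτp : τ.val < p := τ.isLt
  -- split on wrap-around
  rcases lt_or_eq_of_le (show τ.val + 1 ≤ p by omega) with hc | hc
  · -- no wrap : τ.val + 1 < p
    have hvadd : ((τ + 1) : Fin p).val = τ.val + 1 := by
      rw [Fin.val_add, Fin.val_one', Nat.mod_eq_of_lt (by omega : 1 < p),
        Nat.mod_eq_of_lt hc]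
    have hfor : ∀ r ∈ Finset.Icc 1 p, DD p (step p a τ) b r
        = D r - (if r = τ.val + 1 then (1 : ℤ) else 0) := by
      intro r hr
      rw [Finset.mem_Icc] at hr
      rw [hDstep r hr.2, hvadd]
      split_ifs <;> omega
    have hσ : ∑ r ∈ Finset.Icc 1 p, DD p (step p a τ) b r
        = (∑ r ∈ Finset.Icc 1 p, D r) - 1 := by
      rw [Finset.sum_congr rfl hfor, Finset.sum_sub_distrib,
        Finset.sum_ite_eq' (Finset.Icc 1 p) (τ.val + 1) (fun _ => (1 : ℤ)),
        if_pos (Finset.mem_Icc.2 ⟨by omega, by omega⟩)]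
    have hmv' : mv p (step p a τ) b = m := by
      apply le_antisymm
      · have hrmne : rm ≠ τ.val + 1 := by
          intro h
          rw [h, hDτ1] at hmval
          omega
        have h5 := mv_le p (step p a τ) b hrm
        rw [hfor rm hrm, if_neg hrmne, hmval] at h5
        omega
      · apply le_mv
        intro r hr
        rw [hfor r hr]
        rcases eq_or_ne r (τ.val + 1) with rfl | h
        · rw [if_pos rfl, hDτ1]; omega
        · rw [if_neg h]
          have := hmmin r hr
          omega
    refine ⟨τ, hlegal, ?_, ?_, ?_⟩
    · intro j
      rcases eq_or_ne j τ with rfl | h1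
      · left; exact hs1
      rcases eq_or_ne j (τ + 1) with rfl | h2
      · right; exact hs2
      · rw [hs3 j h1 h2]; exact ha j
    · rw [sum_step p a τ hlegal, ha']
    · have hfin : (Phi p (step p a τ) b : ℤ) + 1 = (Phi p a b : ℤ) := by
        rw [Phi_int, Phi_int, hσ, ← hD, ← hmdef, hmv']
        ring
      exact_mod_cast hfin
  · -- wrap : τ.val + 1 = p
    have hvadd : ((τ + 1) : Fin p).val = 0 := by
      rw [Fin.val_add, Fin.val_one', Nat.mod_eq_of_lt (by omega : 1 < p), hc, Nat.mod_self]
    have hM0' : M = 0 := by rw [← hDτ1, hc]; exact hDp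
    have hfor : ∀ r ∈ Finset.Icc 1 p, DD p (step p a τ) b r
        = D r + 1 - (if r = p then (1 : ℤ) else 0) := by
      intro r hr
      rw [Finset.mem_Icc] at hr
      rw [hDstep r hr.2, hvadd]
      have h0r : 0 < r := hr.1
      split_ifs <;> omega
    have hσ : ∑ r ∈ Finset.Icc 1 p, DD p (step p a τ) b r
        = (∑ r ∈ Finset.Icc 1 p, D r) + p - 1 := by
      rw [Finset.sum_congr rfl hfor]
      rw [Finset.sum_sub_distrib, Finset.sum_add_distrib, Finset.sum_const, Nat.card_Icc,
        Finset.sum_ite_eq' (Finset.Icc 1 p) p (fun _ => (1 : ℤ)), if_pos hpIcc]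
      simp
    have hmlt : m < 0 := hM0' ▸ hmM
    have hmv' : mv p (step p a τ) b = m + 1 := by
      apply le_antisymm
      · have hrmne : rm ≠ p := by
          intro h
          rw [h, hDp] at hmval
          omega
        have h5 := mv_le p (step p a τ) b hrm
        rw [hfor rm hrm, if_neg hrmne, hmval] at h5
        omega
      · apply le_mv
        intro r hr
        rw [hfor r hr]
        rcases eq_or_ne r p with rfl | h
        · rw [if_pos rfl, hDp]; omega
        · rw [if_neg h]
          have := hmmin r hr
          omega
    refine ⟨τ, hlegal, ?_, ?_, ?_⟩
    · intro j
      rcases eq_or_ne j τ with rfl | h1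
      · left; exact hs1
      rcases eq_or_ne j (τ + 1) with rfl | h2
      · right; exact hs2
      · rw [hs3 j h1 h2]; exact ha j
    · rw [sum_step p a τ hlegal, ha']
    · have hfin : (Phi p (step p a τ) b : ℤ) + 1 = (Phi p a b : ℤ) := by
        rw [Phi_int, Phi_int, hσ, ← hD, ← hmdef, hmv']
        ring
      exact_mod_cast hfin

end Stmt4Aux

/-- The dual configurations form a strongly connected subgraph of the move graph. -/
theorem stmt4 (p k q : ℕ) [NeZero p] (hq : 0 < q) (hqp : q < p)
    (a b : Fin p → ℕ)
    (ha : ∀ i, a i = k ∨ a i = k + 1) (ha' : ∑ i, a i = k * p + q)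
    (hb : ∀ i, b i = k ∨ b i = k + 1) (hb' : ∑ i, b i = k * p + q) :
    Relation.ReflTransGen (Move p) a b := by
  suffices H : ∀ n (c : Fin p → ℕ), (∀ i, c i = k ∨ c i = k + 1) → (∑ i, c i = k * p + q) →
      Stmt4Aux.Phi p c b = n → Relation.ReflTransGen (Move p) c b by
    exact H _ a ha ha' rfl
  intro n
  induction n using Nat.strong_induction_on with
  | _ n ih =>
    intro c hc hc' hn
    by_cases hcb : c = b
    · rw [hcb]
    · obtain ⟨τ, hlegal, h1, h2, h3⟩ := Stmt4Aux.key p k q hq hqp c b hc hc' hb hb' hcb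
      refine Relation.ReflTransGen.head ⟨τ, hlegal, rfl⟩ ?_
      exact ih (Stmt4Aux.Phi p (step p c τ) b) (by omega) _ h1 h2 rfl
end

section
/- For any sequence of legal moves C from configuration a to configuration b, the shot vector s(C) satisfies s(C) = s_p(C)·(1,...,1) + d(a,b), where d(a,b)_j = (a_1+...+a_j) - (b_1+...+b_j) for j < p and d(a,b)_p = 0. -/
lemma step_diff (p : ℕ) [NeZero p] (a : Fin p → ℕ) (i : Fin p) (hne : i + 1 ≠ i)
    (ha : 1 ≤ a i) (k : Fin p) :
    (a k : ℤ) - (step p a i k : ℤ) = (if k = i then 1 else 0) - (if k = i + 1 then 1 else 0) := by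
  simp only [step, Function.update_apply]
  split_ifs with h1 h2 h2 <;>
    first | omega | (subst h1; omega) | (subst h2; omega)

lemma dvec_step (p : ℕ) [NeZero p] (a : Fin p → ℕ) (i : Fin p) (hne : i + 1 ≠ i)
    (ha : 1 ≤ a i) (j : Fin p) :
    dvec p a (step p a i) j
      = (if i = j then 1 else 0) - (if i = lastIdx p then 1 else 0) := by
  unfold dvec
  simp only [step_diff p a i hne ha]
  rw [Finset.sum_sub_distrib, Finset.sum_ite_eq', Finset.sum_ite_eq']
  simp only [Finset.mem_filter, Finset.mem_univ, true_and]
  have hj : j.val < p := j.isLt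
  have hi : i.val < p := i.isLt
  have hadd : (i + 1).val = (i.val + 1) % p := by
    simp [Fin.add_def]
  have hl : (lastIdx p).val = p - 1 := rfl
  have h1 : i.val + 1 < p → (i+1).val = i.val + 1 := by intro h; rw [hadd, Nat.mod_eq_of_lt h]
  have h2 : i.val + 1 = p → (i+1).val = 0 := by intro h; rw [hadd, h, Nat.mod_self]
  simp only [show ((· ≤ j) i) = (i ≤ j) from rfl, Fin.le_def, Fin.ext_iff, hl]
  split_ifs <;> omega

lemma dvec_trans (p : ℕ) (a c b : Fin p → ℕ) (j : Fin p) :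
    dvec p a b j = dvec p a c j + dvec p c b j := by
  unfold dvec
  rw [← Finset.sum_add_distrib]
  exact Finset.sum_congr rfl (fun k _ => by ring)

/-- For any move sequence `C` from `a` to `b`, the shot vector satisfies
`s(C) = s_p(C)·(1,…,1) + d(a,b)`. -/
theorem stmt7 (p : ℕ) [NeZero p] (a b : Fin p → ℕ) (C : List (Fin p))
    (h : playList p a C b) :
    ∀ j : Fin p, (C.count j : ℤ) = (C.count (lastIdx p) : ℤ) + dvec p a b j := by
  induction C generalizing a with
  | nil =>
    intro j
    cases h
    simp [dvec]
  | cons i L ih =>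
    intro j
    obtain ⟨hleg, hrest⟩ := h
    have hne : i + 1 ≠ i := by intro h; rw [legal, h] at hleg; exact lt_irrefl _ hleg
    have ha : 1 ≤ a i := by have := hleg; unfold legal at this; omega
    have := ih (step p a i) hrest j
    rw [dvec_trans p a (step p a i) b j, dvec_step p a i hne ha j]
    simp only [List.count_cons]
    push_cast
    rw [this]
    simp only [beq_iff_eq]
    split_ifs <;> ring
end

section
/- Suppose sequences of legal moves lead from a configuration O to configurations a and b, with shot vectors s and t respectively. If there is an index j with s_j ≤ t_j and s_{j'} ≥ t_{j'} for all j' ≠ j, and the move at position j is legal from b (i.e., b_{j+1} < b_j), then the move at position j is also legal from a (i.e., a_{j+1} < a_j). -/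

lemma key_count (p : ℕ) [NeZero p] (k : Fin p) (M : List (Fin p)) (x : Fin p) :
    ((k :: M).count x : ℤ) = M.count x + (if x = k then 1 else 0) := by
  by_cases hx : x = k <;> simp [List.count_cons, hx] <;> exact Ne.symm hx

lemma key (p : ℕ) [NeZero p] (L : List (Fin p)) : ∀ O a : Fin p → ℕ,
    playList p O L a → ∀ i, (a i : ℤ) = O i - L.count i + L.count (i - 1) := by
  induction L with
  | nil =>
    intro O a h i
    simp only [playList] at h
    simp [h]
  | cons k M ih =>
    intro O a h i
    obtain ⟨hleg, hpl⟩ := h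
    have hne : k + 1 ≠ k := by
      intro h
      have : O (k + 1) < O k := hleg
      rw [h] at this
      exact lt_irrefl _ this
    have hOk : 1 ≤ O k := by
      have : O (k + 1) < O k := hleg
      omega
    have hstep : ∀ x : Fin p, ((step p O k) x : ℤ)
        = O x - (if x = k then 1 else 0) + (if x = k + 1 then 1 else 0) := by
      intro x
      unfold step
      rcases eq_or_ne x (k + 1) with h1 | h1
      · subst h1
        simp [Function.update_apply, hne]
      · rcases eq_or_ne x k with h2 | h2
        · subst h2
          simp [Function.update_apply, h1, Ne.symm hne]
          omega
        · simp [Function.update_apply, h1, h2]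
    have hi := ih (step p O k) a hpl i
    have hsub : ∀ x : Fin p, (x - 1 = k) ↔ (x = k + 1) := by
      intro x; constructor
      · intro h; rw [← h]; exact (sub_add_cancel x 1).symm
      · intro h; rw [h]; exact add_sub_cancel_right k 1
    rw [hi, hstep i, key_count p k M i, key_count p k M (i - 1)]
    simp only [hsub]
    ring

/-- If the shot vectors of two plays from `O` (to `a` and to `b`) satisfy `s_j ≤ t_j`
and `s_{j'} ≥ t_{j'}` for `j' ≠ j`, and the move at `j` is legal from `b`,
then it is also legal from `a`. -/
theorem stmt8 (p : ℕ) [NeZero p] (O a b : Fin p → ℕ) (C D : List (Fin p))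
    (hC : playList p O C a) (hD : playList p O D b) (j : Fin p)
    (hj : C.count j ≤ D.count j)
    (hj' : ∀ j' : Fin p, j' ≠ j → D.count j' ≤ C.count j')
    (hb : legal p b j) :
    legal p a j := by
  have ka := key p C O a hC
  have kb := key p D O b hD
  have hne : j + 1 ≠ j := by
    intro h
    have : b (j + 1) < b j := hb
    rw [h] at this
    exact lt_irrefl _ this
  have hne2 : j - 1 ≠ j := by
    intro h
    apply hne
    exact (sub_eq_iff_eq_add.mp h).symm
  have h1 := ka (j + 1)
  have h2 := ka j
  have h3 := kb (j + 1)
  have h4 := kb j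
  rw [add_sub_cancel_right] at h1 h3
  have e1 : (C.count j : ℤ) ≤ D.count j := by exact_mod_cast hj
  have e2 : (D.count (j + 1) : ℤ) ≤ C.count (j + 1) := by
    exact_mod_cast hj' (j + 1) hne
  have e3 : (D.count (j - 1) : ℤ) ≤ C.count (j - 1) := by
    exact_mod_cast hj' (j - 1) hne2
  have hbz : (b (j + 1) : ℤ) < b j := by exact_mod_cast hb
  have : (a (j + 1) : ℤ) < a j := by linarith
  exact_mod_cast this
end

section
/- Let a and b be non-dual configurations such that b is reachable from a by legal moves. Then all sequences of legal moves from a to b have the same shot vector, and in particular the same length. -/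
set_option linter.unusedSectionVars false
set_option linter.unusedVariables false

section aux
variable {p : ℕ} [NeZero p]

lemma legal_succ_ne {a : Fin p → ℕ} {i : Fin p} (h : legal p a i) : i + 1 ≠ i := by
  intro he
  unfold legal at h
  rw [he] at h
  exact lt_irrefl _ h

lemma step_eval (a : Fin p → ℕ) (i j : Fin p) :
    step p a i j = if j = i + 1 then a (i+1) + 1 else if j = i then a i - 1 else a j := by
  simp [step, Function.update_apply]

lemma step_cast {a : Fin p → ℕ} {i : Fin p} (h : legal p a i) (j : Fin p) :
    ((step p a i j : ℤ)) = a j + (if j - 1 = i then 1 else 0) - (if j = i then 1 else 0) := by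
  have hne := legal_succ_ne h
  have hsub : (j - 1 = i) ↔ j = i + 1 := sub_eq_iff_eq_add
  have hpos : 1 ≤ a i := by unfold legal at h; omega
  rw [step_eval]
  by_cases h1 : j = i + 1
  · have h2 : j ≠ i := by rw [h1]; exact hne
    subst h1
    simp [hne, hsub, h2]
  · by_cases h2 : j = i
    · subst h2
      simp [h1, hsub]
      omega
    · simp [h1, h2, hsub]

lemma playList_balance : ∀ (L : List (Fin p)) (x b : Fin p → ℕ), playList p x L b →
    ∀ j, (b j : ℤ) = x j + L.count (j - 1) - L.count j := by
  intro L
  induction L with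
  | nil =>
    intro x b h j
    have : b = x := h
    subst this
    simp
  | cons i L ih =>
    intro x b h j
    obtain ⟨hleg, hplay⟩ := h
    have hne := legal_succ_ne hleg
    have hIH := ih _ _ hplay j
    have e1 : (j - 1 = i) ↔ (j = i + 1) := sub_eq_iff_eq_add
    rw [hIH, step_cast hleg j, List.count_cons, List.count_cons]
    simp only [beq_iff_eq]
    by_cases h1 : j = i + 1 <;> by_cases h2 : j = i
    · exact absurd (by rw [← h1, h2] : i + 1 = i) hne
    · have hd : j - 1 = i := e1.mpr h1
      simp only [if_pos hd, if_pos hd.symm, if_neg h2, if_neg (fun hh : i = j => h2 hh.symm)]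
      push_cast; ring
    · have hd : ¬ (j - 1 = i) := fun hh => h1 (e1.mp hh)
      simp only [if_neg hd, if_neg (fun hh : i = j - 1 => hd hh.symm), if_pos h2, if_pos h2.symm]
      push_cast; ring
    · have hd : ¬ (j - 1 = i) := fun hh => h1 (e1.mp hh)
      simp only [if_neg hd, if_neg (fun hh : i = j - 1 => hd hh.symm), if_neg h2,
        if_neg (fun hh : i = j => h2 hh.symm)]
      push_cast; ring

lemma playList_append : ∀ (L₁ L₂ : List (Fin p)) (x b : Fin p → ℕ),
    playList p x (L₁ ++ L₂) b → ∃ y, playList p x L₁ y ∧ playList p y L₂ b := by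
  intro L₁
  induction L₁ with
  | nil => intro L₂ x b h; exact ⟨x, rfl, h⟩
  | cons i L ih =>
    intro L₂ x b h
    obtain ⟨hleg, hplay⟩ := h
    obtain ⟨y, h1, h2⟩ := ih L₂ _ b hplay
    exact ⟨y, ⟨hleg, h1⟩, h2⟩

lemma playList_sum {a b : Fin p → ℕ} {L : List (Fin p)} (hL : playList p a L b) :
    ∑ i, b i = ∑ i, a i := by
  have h := playList_balance L a b hL
  have hz : (∑ i, (b i : ℤ)) = ∑ i, ((a i : ℤ) + L.count (i - 1) - L.count i) :=
    Finset.sum_congr rfl (fun i _ => h i)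
  have hre : ∑ i : Fin p, ((L.count (i - 1) : ℤ)) = ∑ i : Fin p, (L.count i : ℤ) :=
    Fintype.sum_equiv (Equiv.subRight (1 : Fin p)) _ _ (fun i => rfl)
  rw [Finset.sum_sub_distrib, Finset.sum_add_distrib, hre] at hz
  simp at hz
  exact_mod_cast hz

end aux

section lists
variable {α : Type*}

lemma split_last [DecidableEq α] {x : α} : ∀ {L : List α}, x ∈ L → ∃ E F, L = E ++ x :: F ∧ x ∉ F := by
  intro L
  induction L with
  | nil => simp
  | cons a L ih =>
    intro h
    by_cases hx : x ∈ L
    · obtain ⟨E, F, h1, h2⟩ := ih hx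
      exact ⟨a :: E, F, by rw [h1]; rfl, h2⟩
    · have hxa : x = a := by
        rcases List.mem_cons.mp h with h | h
        · exact h
        · exact absurd h hx
      exact ⟨[], L, by rw [hxa]; rfl, hx⟩

lemma two_splits {i j : α} (hij : i ≠ j) : ∀ (E : List α) {E' F F' D},
    D = E ++ j :: F → D = E' ++ i :: F' → i ∈ F ∨ j ∈ F' := by
  intro E
  induction E with
  | nil =>
    intro E' F F' D h1 h2
    subst h1
    cases E' with
    | nil =>
      simp at h2
      exact absurd h2.1.symm hij
    | cons a E'' =>
      simp at h2
      left
      rw [h2.2]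
      simp
  | cons a E ih =>
    intro E' F F' D h1 h2
    subst h1
    cases E' with
    | nil =>
      simp at h2
      right
      rw [← h2.2]
      simp
    | cons a' E'' =>
      simp at h2
      exact ih rfl h2.2

lemma split_le (x : α) : ∀ (A : List α) {B E F : List α},
    A ++ x :: B = E ++ x :: F → x ∉ F → A.length ≤ E.length := by
  intro A
  induction A with
  | nil => intro B E F h hx; simp
  | cons a A ih =>
    intro B E F h hx
    cases E with
    | nil =>
      simp at h
      exact absurd (h.2 ▸ (by simp : x ∈ A ++ x :: B)) (h.1 ▸ hx)
    | cons e E' =>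
      simp at h
      simpa using Nat.succ_le_succ (ih h.2 hx)

end lists

section key
variable {p : ℕ} [NeZero p]

lemma key_ineq {a b : Fin p → ℕ} {E F : List (Fin p)} {j : Fin p} (hF : j ∉ F)
    (h : playList p a (E ++ j :: F) b) :
    (b (j+1) : ℤ) + F.count (j+1) + F.count (j-1) ≤ b j + 1 := by
  obtain ⟨y, hE, hrest⟩ := playList_append E (j :: F) a b h
  obtain ⟨hleg, hFplay⟩ := hrest
  have hne := legal_succ_ne hleg
  set x := step p y j with hx
  have h1 := playList_balance F x b hFplay (j + 1)
  have h2 := playList_balance F x b hFplay j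
  have hcnt : F.count j = 0 := List.count_eq_zero.mpr hF
  have hx1 : x (j+1) = y (j+1) + 1 := by
    rw [hx, step_eval]
    simp
  have hleg' : y (j+1) < y j := hleg
  have hx2 : (x j : ℤ) = (y j : ℤ) - 1 := by
    rw [hx, step_eval]
    rw [if_neg (Ne.symm hne), if_pos rfl]
    omega
  have e1 : (j : Fin p) + 1 - 1 = j := add_sub_cancel_right j 1
  rw [e1] at h1
  rw [hcnt] at h1 h2
  omega

end key

section main
variable {p : ℕ} [NeZero p]
open Fin.NatCast

lemma allFire_dual {a b : Fin p → ℕ} {L : List (Fin p)}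
    (hL : playList p a L b) (hall : ∀ j : Fin p, 1 ≤ L.count j) :
    Dual p (∑ i, b i) b := by
  have hppos : 0 < p := Nat.pos_of_ne_zero (NeZero.ne p)
  -- p = 1 is impossible
  rcases Nat.lt_or_ge p 2 with hp | hp
  · exfalso
    have hp1 : p = 1 := by omega
    subst hp1
    have hmem : (0 : Fin 1) ∈ L := List.count_pos_iff.mp (hall 0)
    cases L with
    | nil => simp at hmem
    | cons i L =>
      obtain ⟨hleg, -⟩ := hL
      have : i + 1 = i := Subsingleton.elim _ _
      rw [legal, this] at hleg
      exact lt_irrefl _ hleg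
  -- now p ≥ 2
  have hone : (1 : Fin p) ≠ 0 := by
    intro h
    have := congrArg Fin.val h
    rw [Fin.val_one' p] at this
    simp at this
    omega
  have hne1 : ∀ j : Fin p, j + 1 ≠ j := by
    intro j h
    exact hone (add_eq_left.mp (by rwa [add_comm] at h))
  have hne2 : ∀ j : Fin p, j - 1 ≠ j := by
    intro j h
    exact hone (sub_eq_self.mp h)
  -- choose splits at last occurrences
  choose E F hsplit hnotmem using
    fun j : Fin p => split_last (List.count_pos_iff.mp (hall j))
  have hkey : ∀ j : Fin p,
      (b (j+1) : ℤ) + (F j).count (j+1) + (F j).count (j-1) ≤ b j + 1 := by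
    intro j
    exact key_ineq (hnotmem j) ((hsplit j) ▸ hL)
  have htot : ∀ i j : Fin p, i ≠ j → i ∈ F j ∨ j ∈ F i := by
    intro i j hij
    exact two_splits hij (E j) (hsplit j) (hsplit i)
  -- invariant climb
  have hinv : ∀ (l : ℕ) (j : Fin p),
      (b (j + (l : Fin p)) : ℤ) ≤ b j ∨
      ((b (j + (l : Fin p)) : ℤ) ≤ b j + 1 ∧ (j + (l : Fin p) - 1) ∈ F (j + (l : Fin p))) := by
    intro l
    induction l with
    | zero => intro j; left; simp
    | succ l ih =>
      intro j
      have hcast : ((l+1 : ℕ) : Fin p) = (l : Fin p) + 1 := by push_cast; ring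
      have hIH := ih j
      rw [hcast, ← add_assoc]
      set i := j + (l : Fin p) with hi
      have hkeyi := hkey i
      by_cases hmem : i + 1 ∈ F i
      · have hc1 : 1 ≤ (F i).count (i+1) := List.count_pos_iff.mpr hmem
        rcases hIH with hA | ⟨hB, hBm⟩
        · left; omega
        · have hc2 : 1 ≤ (F i).count (i-1) := List.count_pos_iff.mpr hBm
          left; omega
      · have hio : i ∈ F (i+1) := (htot (i+1) i (hne1 i)).resolve_left hmem
        right
        constructor
        · rcases hIH with hA | ⟨hB, hBm⟩
          · omega
          · have hc2 : 1 ≤ (F i).count (i-1) := List.count_pos_iff.mpr hBm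
            omega
        · rw [add_sub_cancel_right]
          exact hio
  have hball : ∀ i j : Fin p, (b i : ℤ) ≤ b j + 1 := by
    intro i j
    have h := hinv (i - j).val j
    rw [Fin.cast_val_eq_self, add_comm, sub_add_cancel] at h
    rcases h with h | ⟨h, -⟩
    · omega
    · exact h
  -- position finishing first
  obtain ⟨j0, -, hmin⟩ := Finset.exists_min_image Finset.univ (fun j => (E j).length)
    ⟨⟨0, hppos⟩, Finset.mem_univ _⟩
  have hmem_all : ∀ i, i ≠ j0 → i ∈ F j0 := by
    intro i hi
    rcases htot i j0 hi with h | h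
    · exact h
    · exfalso
      obtain ⟨G, H, hGH⟩ := List.append_of_mem h
      have hsplit2 : L = (E i ++ i :: G) ++ j0 :: H := by
        rw [hsplit i, hGH]; simp
      have hle := split_le j0 (E i ++ i :: G)
        (hsplit2.symm.trans (hsplit j0)) (hnotmem j0)
      have hge := hmin i (Finset.mem_univ _)
      simp [List.length_append] at hle
      omega
  have h1 : j0 + 1 ∈ F j0 := hmem_all _ (hne1 j0)
  have h2 : j0 - 1 ∈ F j0 := hmem_all _ (hne2 j0)
  have hc1 : 1 ≤ (F j0).count (j0+1) := List.count_pos_iff.mpr h1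
  have hc2 : 1 ≤ (F j0).count (j0-1) := List.count_pos_iff.mpr h2
  have hdrop : (b (j0+1) : ℤ) + 1 ≤ b j0 := by have := hkey j0; omega
  set m := b (j0 + 1) with hm
  have hbj0 : b j0 = m + 1 := by have := hball j0 (j0 + 1); omega
  have hrange : ∀ i, b i = m ∨ b i = m + 1 := by
    intro i
    have u := hball i (j0+1)
    have v := hball j0 i
    omega
  -- arithmetic of duality
  set q := (Finset.univ.filter (fun i => b i = m + 1)).card with hq
  have hsum : ∑ i, b i = p * m + q := by
    have hbi : ∀ i : Fin p, b i = m + (if b i = m + 1 then 1 else 0) := by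
      intro i
      rcases hrange i with h | h <;> simp [h]
    calc ∑ i, b i = ∑ i : Fin p, (m + (if b i = m + 1 then 1 else 0)) :=
          Finset.sum_congr rfl (fun i _ => hbi i)
      _ = p * m + q := by
          rw [Finset.sum_add_distrib, Finset.sum_const, Finset.sum_boole]
          simp [mul_comm, hq]
  have hq1 : 1 ≤ q := by
    have : j0 ∈ Finset.univ.filter (fun i => b i = m + 1) := by
      simp [hbj0]
    have := Finset.card_pos.mpr ⟨j0, this⟩
    omega
  have hq2 : q < p := by
    have hsub : Finset.univ.filter (fun i => b i = m + 1) ⊆ Finset.univ := Finset.filter_subset _ _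
    have hle : q ≤ p := by
      have := Finset.card_le_card hsub
      simpa using this
    rcases Nat.lt_or_ge q p with h | h
    · exact h
    · exfalso
      have heq : Finset.univ.filter (fun i => b i = m + 1) = Finset.univ :=
        Finset.eq_of_subset_of_card_le hsub (by simpa using h)
      have : (j0 + 1) ∈ Finset.univ.filter (fun i => b i = m + 1) := by
        rw [heq]; exact Finset.mem_univ _
      simp at this
      omega
  constructor
  · rw [hsum]
    intro hdvd
    have : p ∣ q := (Nat.dvd_add_right ⟨m, rfl⟩).mp hdvd
    have := Nat.le_of_dvd (by omega) this
    omega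
  · have hdiv : (p * m + q) / p = m := by
      rw [Nat.mul_add_div hppos]
      simp [Nat.div_eq_of_lt hq2]
    intro i
    rw [hsum, hdiv]
    exact hrange i

end main

section final
variable {p : ℕ} [NeZero p]
open Fin.NatCast

lemma length_eq_sum_count (L : List (Fin p)) : L.length = ∑ j, L.count j := by
  induction L with
  | nil => simp
  | cons i L ih =>
    simp only [List.length_cons, List.count_cons, beq_iff_eq]
    rw [Finset.sum_add_distrib, ← ih]
    simp [Finset.sum_ite_eq]


/-- Between two non-dual configurations, all move sequences have the same shot vector,
hence the same length. -/
theorem stmt9 (p n : ℕ) [NeZero p] (a b : Fin p → ℕ)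
    (ha : ∑ i, a i = n) (hna : ¬ Dual p n a) (hnb : ¬ Dual p n b)
    (C D : List (Fin p)) (hC : playList p a C b) (hD : playList p a D b) :
    (∀ i, C.count i = D.count i) ∧ C.length = D.length := by
  have hsum_b : ∑ i, b i = n := by rw [playList_sum hC, ha]
  have hC' := playList_balance C a b hC
  have hD' := playList_balance D a b hD
  have hstep : ∀ j : Fin p, (D.count j : ℤ) - C.count j
      = (D.count (j-1) : ℤ) - C.count (j-1) := by
    intro j
    have h1 := hC' j
    have h2 := hD' j
    omega
  have hconst : ∀ j : Fin p, (D.count j : ℤ) - C.count j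
      = (D.count (0 : Fin p) : ℤ) - C.count (0 : Fin p) := by
    have hnat : ∀ l : ℕ, (D.count ((l : Fin p)) : ℤ) - C.count ((l : Fin p))
        = (D.count (0 : Fin p) : ℤ) - C.count (0 : Fin p) := by
      intro l
      induction l with
      | zero => simp
      | succ l ih =>
        have hcast : ((l+1 : ℕ) : Fin p) = (l : Fin p) + 1 := by push_cast; ring
        rw [hcast]
        have := hstep ((l : Fin p) + 1)
        rw [add_sub_cancel_right] at this
        rw [this, ih]
    intro j
    have := hnat j.val
    rwa [Fin.cast_val_eq_self] at this
  have hcnts : ∀ i, C.count i = D.count i := by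
    rcases lt_trichotomy ((D.count (0 : Fin p) : ℤ) - C.count (0 : Fin p)) 0 with h | h | h
    · exfalso
      apply hnb
      rw [← hsum_b]
      apply allFire_dual hC
      intro j
      have := hconst j
      omega
    · intro i
      have := hconst i
      omega
    · exfalso
      apply hnb
      rw [← hsum_b]
      apply allFire_dual hD
      intro j
      have := hconst j
      omega
  refine ⟨hcnts, ?_⟩
  rw [length_eq_sum_count, length_eq_sum_count]
  exact Finset.sum_congr rfl (fun i _ => hcnts i)


end final
end

section
/- A non-dual configuration never lies on a nontrivial cycle: if a is non-dual and there is a nonempty sequence of legal moves from a back to a, then a contradiction follows. Equivalently, every nonempty move sequence from a to a is impossible for non-dual a. -/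
section CardGame

variable {p : ℕ} [NeZero p]

/-- Auxiliary: `j + 1 ≠ j` in `Fin p` when `p ≥ 2`. -/
lemma gc_add_one_ne (hp : 2 ≤ p) (j : Fin p) : j + 1 ≠ j := by
  intro hEq
  have h1 : (1 : Fin p) = 0 := by
    have := congrArg (· - j) hEq
    simpa [add_sub_cancel_right] using this
  have h2 := congrArg Fin.val h1
  rw [Fin.val_one'] at h2
  rw [Nat.mod_eq_of_lt (by omega : 1 < p)] at h2
  simp at h2

lemma gc_step_apply (b : Fin p → ℕ) (j i : Fin p) :
    step p b j i = if i = j + 1 then b (j + 1) + 1 else if i = j then b j - 1 else b i := by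
  simp [step, Function.update_apply]

lemma gc_sub_one_val (hp : 2 ≤ p) (z : Fin p) (hz : z ≠ 0) : (z - 1).val + 1 = z.val := by
  have h1 : (1 : Fin p).val = 1 := by
    rw [Fin.val_one']; exact Nat.mod_eq_of_lt (by omega)
  have hzv : 1 ≤ z.val :=
    Nat.one_le_iff_ne_zero.mpr (fun h0 => hz (Fin.ext (by rw [h0]; simp)))
  have hlt := z.isLt
  have hs : (z - 1).val = (p - (1 : Fin p).val + z.val) % p := by rw [Fin.sub_def]
  rw [h1] at hs
  have he : p - 1 + z.val = (z.val - 1) + p := by omega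
  rw [he, Nat.add_mod_right, Nat.mod_eq_of_lt (by omega : z.val - 1 < p)] at hs
  omega

/-- Potential function: sum of squares. -/
def gcPhi {p : ℕ} [NeZero p] (b : Fin p → ℕ) : ℤ := ∑ i, (b i : ℤ) ^ 2

lemma gc_phi_step (hp : 2 ≤ p) (b : Fin p → ℕ) (j : Fin p) (hleg : legal p b j) :
    gcPhi (step p b j) = gcPhi b + 2 * ((b (j + 1) : ℤ) + 1 - (b j : ℤ)) := by
  have hne := gc_add_one_ne hp j
  have hleg' : b (j + 1) < b j := hleg
  have hj1 : 1 ≤ b j := by omega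
  have key : ∀ i : Fin p, i ∉ ({j, j + 1} : Finset (Fin p)) →
      ((step p b j i : ℤ) ^ 2 - (b i : ℤ) ^ 2) = 0 := by
    intro i hi
    simp only [Finset.mem_insert, Finset.mem_singleton, not_or] at hi
    rw [gc_step_apply, if_neg hi.2, if_neg hi.1]
    ring
  have hsum : gcPhi (step p b j) - gcPhi b
      = ∑ i ∈ ({j, j + 1} : Finset (Fin p)), ((step p b j i : ℤ) ^ 2 - (b i : ℤ) ^ 2) := by
    unfold gcPhi
    rw [← Finset.sum_sub_distrib]
    exact (Finset.sum_subset (Finset.subset_univ _) (fun i _ hi => key i hi)).symm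
  rw [Finset.sum_pair hne.symm] at hsum
  have e1 : step p b j j = b j - 1 := by
    rw [gc_step_apply, if_neg hne.symm, if_pos rfl]
  have e2 : step p b j (j + 1) = b (j + 1) + 1 := by
    rw [gc_step_apply, if_pos rfl]
  rw [e1, e2] at hsum
  have c1 : ((b j - 1 : ℕ) : ℤ) = (b j : ℤ) - 1 := by omega
  rw [c1] at hsum
  push_cast at hsum ⊢
  linarith [hsum, sq_nonneg ((b j : ℤ))]

lemma gc_phi_step_le (hp : 2 ≤ p) (b : Fin p → ℕ) (j : Fin p) (hleg : legal p b j) :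
    gcPhi (step p b j) ≤ gcPhi b := by
  rw [gc_phi_step hp b j hleg]
  have hleg' : b (j + 1) < b j := hleg
  have : (b (j + 1) : ℤ) + 1 - (b j : ℤ) ≤ 0 := by omega
  linarith

lemma gc_phi_mono (hp : 2 ≤ p) :
    ∀ (L : List (Fin p)) (b c : Fin p → ℕ), playList p b L c → gcPhi c ≤ gcPhi b := by
  intro L
  induction L with
  | nil => intro b c hbc; rw [show c = b from hbc]
  | cons j L ih =>
    intro b c hbc
    obtain ⟨hleg, hplay⟩ := hbc
    exact le_trans (ih _ _ hplay) (gc_phi_step_le hp b j hleg)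

lemma gc_step_bound (m : ℕ) (b : Fin p → ℕ) (j : Fin p) (hleg : legal p b j)
    (hb : ∀ i, m ≤ b i) : ∀ i, m ≤ step p b j i := by
  have hleg' : b (j + 1) < b j := hleg
  intro i
  rw [gc_step_apply]
  split_ifs with h1 h2
  · have := hb (j + 1); omega
  · have := hb (j + 1); omega
  · exact hb i

lemma gc_play_count (hp : 2 ≤ p) :
    ∀ (L : List (Fin p)) (b c : Fin p → ℕ), playList p b L c →
      ∀ j, (c j : ℤ) = (b j : ℤ) + L.count (j - 1) - L.count j := by
  intro L
  induction L with
  | nil => intro b c hbc j; rw [show c = b from hbc]; simp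
  | cons i L ih =>
    intro b c hbc j
    obtain ⟨hleg, hplay⟩ := hbc
    have hleg' : b (i + 1) < b i := hleg
    have hne := gc_add_one_ne hp i
    have hIH := ih _ _ hplay j
    have hsub : i = j - 1 ↔ j = i + 1 := by
      constructor
      · intro h; rw [h]; simp
      · intro h; rw [h]; simp
    by_cases h1 : j = i + 1
    · have h2 : j ≠ i := by rw [h1]; exact hne
      have hstep : step p b i j = b j + 1 := by
        rw [gc_step_apply, if_pos h1, h1]
      rw [hstep] at hIH
      have hc1 : (i :: L).count (j - 1) = L.count (j - 1) + 1 := by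
        rw [List.count_cons, if_pos (by simp [hsub.mpr h1])]
      have hc2 : (i :: L).count j = L.count j := by
        rw [List.count_cons, if_neg (by simp only [beq_iff_eq]; exact fun hh => h2 hh.symm),
          Nat.add_zero]
      rw [hc1, hc2]
      push_cast at hIH ⊢
      omega
    · by_cases h2 : j = i
      · have hstep : step p b i j = b j - 1 := by
          rw [gc_step_apply, if_neg h1, if_pos h2, h2]
        rw [hstep] at hIH
        have hge : 1 ≤ b j := by rw [h2]; omega
        have hcast : ((b j - 1 : ℕ) : ℤ) = (b j : ℤ) - 1 := by omega
        rw [hcast] at hIH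
        have hc1 : (i :: L).count (j - 1) = L.count (j - 1) := by
          rw [List.count_cons,
            if_neg (by simp only [beq_iff_eq]; exact fun hcon => h1 (hsub.mp hcon)),
            Nat.add_zero]
        have hc2 : (i :: L).count j = L.count j + 1 := by
          rw [List.count_cons, if_pos (by simp [h2])]
        rw [hc1, hc2]
        push_cast at hIH ⊢
        omega
      · have hstep : step p b i j = b j := by
          rw [gc_step_apply, if_neg h1, if_neg h2]
        rw [hstep] at hIH
        have hc1 : (i :: L).count (j - 1) = L.count (j - 1) := by
          rw [List.count_cons,
            if_neg (by simp only [beq_iff_eq]; exact fun hcon => h1 (hsub.mp hcon)),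
            Nat.add_zero]
        have hc2 : (i :: L).count j = L.count j := by
          rw [List.count_cons, if_neg (by simp only [beq_iff_eq]; exact fun hh => h2 hh.symm),
            Nat.add_zero]
        rw [hc1, hc2]
        exact hIH

open Fin.NatCast in
lemma gc_count_const (L : List (Fin p))
    (hc : ∀ j : Fin p, L.count (j - 1) = L.count j) :
    ∀ j : Fin p, L.count j = L.count 0 := by
  have key : ∀ k : ℕ, L.count ((0 : Fin p) - (k : Fin p)) = L.count 0 := by
    intro k
    induction k with
    | zero => simp
    | succ k ih =>
      have hcast : ((k + 1 : ℕ) : Fin p) = ((k : ℕ) : Fin p) + 1 := by push_cast; ring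
      rw [hcast, sub_add_eq_sub_sub]
      rw [hc ((0 : Fin p) - (k : ℕ))]
      exact ih
  intro j
  have := key ((0 - j).val)
  rwa [Fin.cast_val_eq_self, sub_sub_cancel] at this

/-- Core lemma: tracking a high token `X` (value ≥ m+2) and a hole `Y` (value m) along a
play whose potential is constant.  The cyclic distance from `X` to `Y` never increases, and
strictly decreases unless no move of the play is at position `Y - 1`. -/
lemma gc_core (hp : 2 ≤ p) (m : ℕ) :
    ∀ (L : List (Fin p)) (b c : Fin p → ℕ) (X Y : Fin p),
      playList p b L c → gcPhi c = gcPhi b → (∀ i, m ≤ b i) →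
      m + 2 ≤ b X → b Y = m →
      ∃ X' Y' : Fin p, m + 2 ≤ c X' ∧ c Y' = m ∧ (Y' - X').val ≤ (Y - X).val ∧
        ((Y' - X').val < (Y - X).val ∨ (Y' = Y ∧ ∀ j ∈ L, j + 1 ≠ Y)) := by
  intro L
  induction L with
  | nil =>
    intro b c X Y hbc _ _ hX hY
    obtain rfl : c = b := hbc
    exact ⟨X, Y, hX, hY, le_refl _, Or.inr ⟨rfl, by simp⟩⟩
  | cons j L ih =>
    intro b c X Y hbc hphi hbound hX hY
    obtain ⟨hleg, hplay⟩ := hbc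
    have hleg' : b (j + 1) < b j := hleg
    have hne := gc_add_one_ne hp j
    -- potential is constant at this step
    have hphis : gcPhi (step p b j) = gcPhi b := by
      have h1 := gc_phi_step_le hp b j hleg
      have h2 := gc_phi_mono hp L _ _ hplay
      linarith [hphi]
    have hexact : b (j + 1) + 1 = b j := by
      have hh := gc_phi_step hp b j hleg
      rw [hphis] at hh
      have hh2 : (b (j + 1) : ℤ) + 1 = (b j : ℤ) := by linarith
      exact_mod_cast hh2
    have hbound' := gc_step_bound m b j hleg hbound
    have hphi' : gcPhi c = gcPhi (step p b j) := by rw [hphi, hphis]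
    have hXY : X ≠ Y := fun hcon => by rw [hcon, hY] at hX; omega
    have hYX0 : Y - X ≠ 0 := sub_ne_zero.mpr (Ne.symm hXY)
    have hjY : j ≠ Y := by
      intro hcon
      subst hcon
      have := hbound (j + 1)
      rw [hY] at hleg'
      omega
    by_cases hc1 : j + 1 = Y
    · -- the hole moves backwards from Y to j
      have hbjm : b j = m + 1 := by rw [← hexact, hc1, hY]
      have hXj : X ≠ j := fun hcon => by rw [hcon, hbjm] at hX; omega
      have hXj1 : X ≠ j + 1 := by rw [hc1]; exact hXY
      have hsX : step p b j X = b X := by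
        rw [gc_step_apply, if_neg hXj1, if_neg hXj]
      have hsj : step p b j j = m := by
        rw [gc_step_apply, if_neg hne.symm, if_pos rfl, hbjm]
        omega
      obtain ⟨X', Y', hX', hY', hle, _⟩ :=
        ih (step p b j) c X j hplay hphi' hbound' (hsX ▸ hX) hsj
      have hjval : j = Y - 1 := by rw [← hc1]; simp
      have hdist : (j - X).val + 1 = (Y - X).val := by
        rw [hjval, sub_right_comm]
        exact gc_sub_one_val hp (Y - X) hYX0
      exact ⟨X', Y', hX', hY', by omega, Or.inl (by omega)⟩
    · by_cases hc2 : j = X ∧ b X = m + 2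
      · -- the high token moves forwards from X to X + 1
        obtain ⟨hjX, hbX⟩ := hc2
        have hsnew : step p b j (j + 1) = m + 2 := by
          rw [gc_step_apply, if_pos rfl, hexact, hjX, hbX]
        have hYj1 : Y ≠ j + 1 := fun hcon => hc1 hcon.symm
        have hsY : step p b j Y = m := by
          rw [gc_step_apply, if_neg hYj1, if_neg (Ne.symm hjY), hY]
        obtain ⟨X', Y', hX', hY', hle, _⟩ :=
          ih (step p b j) c (j + 1) Y hplay hphi' hbound' (le_of_eq hsnew.symm) hsY
        have hdist : (Y - (j + 1)).val + 1 = (Y - X).val := by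
          rw [hjX, sub_add_eq_sub_sub]
          exact gc_sub_one_val hp (Y - X) hYX0
        exact ⟨X', Y', hX', hY', by omega, Or.inl (by omega)⟩
      · -- nothing tracked moves
        have hYj1 : Y ≠ j + 1 := fun hcon => hc1 hcon.symm
        have hsY : step p b j Y = m := by
          rw [gc_step_apply, if_neg hYj1, if_neg (Ne.symm hjY), hY]
        have hsX : m + 2 ≤ step p b j X := by
          rw [gc_step_apply]
          split_ifs with h1 h2
          · rw [h1] at hX; omega
          · have h3 : b X ≠ m + 2 := fun hcon => hc2 ⟨h2.symm, hcon⟩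
            rw [h2] at hX h3
            omega
          · exact hX
        obtain ⟨X', Y', hX', hY', hle, hor⟩ :=
          ih (step p b j) c X Y hplay hphi' hbound' hsX hsY
        refine ⟨X', Y', hX', hY', hle, ?_⟩
        rcases hor with hlt | ⟨hYY, hall⟩
        · exact Or.inl hlt
        · refine Or.inr ⟨hYY, ?_⟩
          intro j' hj'
          rcases List.mem_cons.mp hj' with rfl | hmem
          · exact hc1
          · exact hall j' hmem

end CardGame

/-- A non-dual configuration never lies on a nontrivial cycle. -/
theorem stmt10 (p n : ℕ) [NeZero p] (a : Fin p → ℕ)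
    (ha : ∑ i, a i = n) (hna : ¬ Dual p n a)
    (L : List (Fin p)) (hL : L ≠ []) (h : playList p a L a) :
    False := by
  rcases Nat.lt_or_ge p 2 with hp | hp
  · -- degenerate case `p = 1` : no legal move exists at all
    obtain ⟨j, L', rfl⟩ : ∃ j L', L = j :: L' := by
      cases L with
      | nil => exact absurd rfl hL
      | cons j L' => exact ⟨j, L', rfl⟩
    have hp1 : p = 1 := by have := Nat.pos_of_ne_zero (NeZero.ne p); omega
    subst hp1
    have hleg : legal 1 a j := h.1
    have hj : j + 1 = j := by
      apply Fin.ext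
      have h1 := (j + 1).isLt
      have h2 := j.isLt
      omega
    rw [legal, hj] at hleg
    exact lt_irrefl _ hleg
  · obtain ⟨i₀, -, hmin⟩ := Finset.exists_min_image Finset.univ a ⟨0, Finset.mem_univ 0⟩
    set m := a i₀ with hm
    have hbnd : ∀ i, m ≤ a i := fun i => hmin i (Finset.mem_univ i)
    -- every position occurs in `L`
    have hcounts : ∀ j : Fin p, L.count (j - 1) = L.count j := by
      intro j
      have := gc_play_count hp L a a h j
      omega
    have hconst := gc_count_const L hcounts
    have hmem : ∀ j : Fin p, j ∈ L := by
      intro j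
      have h0 : (0 : ℕ) < L.count (0 : Fin p) := by
        obtain ⟨i, L', rfl⟩ : ∃ i L', L = i :: L' := by
          cases L with
          | nil => exact absurd rfl hL
          | cons i L' => exact ⟨i, L', rfl⟩
        rw [← hconst i]
        exact List.count_pos_iff.mpr (List.mem_cons_self (a := i) (l := L'))
      rw [← List.count_pos_iff (a := j), hconst j]
      exact h0
    by_cases hbig : ∃ X, m + 2 ≤ a X
    · -- a "high" token and a "hole" deadlock : the cyclic distance from the token to the
      -- hole strictly decreases every lap, which is absurd.
      obtain ⟨X₀, hX₀⟩ := hbig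
      have claim : ∀ k : ℕ, ∃ X Y : Fin p, m + 2 ≤ a X ∧ a Y = m ∧
          (Y - X).val + k ≤ (i₀ - X₀).val := by
        intro k
        induction k with
        | zero => exact ⟨X₀, i₀, hX₀, rfl, by omega⟩
        | succ k ih =>
          obtain ⟨X, Y, h1, h2, h3⟩ := ih
          obtain ⟨X', Y', hX', hY', hle, hor⟩ :=
            gc_core hp m L a a X Y h rfl hbnd h1 h2
          rcases hor with hlt | ⟨hYY, hall⟩
          · exact ⟨X', Y', hX', hY', by omega⟩
          · exact absurd (by simp : (Y - 1) + 1 = Y) (hall (Y - 1) (hmem (Y - 1)))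
      obtain ⟨X, Y, -, -, h3⟩ := claim ((i₀ - X₀).val + 1)
      omega
    · -- all entries lie in `{m, m+1}` : the configuration is dual, contradiction
      push_neg at hbig
      apply hna
      obtain ⟨j, L', rfl⟩ : ∃ j L', L = j :: L' := by
        cases L with
        | nil => exact absurd rfl hL
        | cons j L' => exact ⟨j, L', rfl⟩
      have hleg' : a (j + 1) < a j := h.1
      have hja : a j = m + 1 := by
        have := hbnd (j + 1); have := hbig j; omega
      have hj1a : a (j + 1) = m := by
        have := hbnd (j + 1); omega
      have hlow : p * m < n := by
        rw [← ha]
        calc p * m = ∑ _i : Fin p, m := by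
              rw [Finset.sum_const, Finset.card_univ, Fintype.card_fin, smul_eq_mul, mul_comm]
          _ < ∑ i, a i :=
              Finset.sum_lt_sum (fun i _ => hbnd i) ⟨j, Finset.mem_univ j, by omega⟩
      have hhigh : n < p * (m + 1) := by
        rw [← ha]
        calc ∑ i, a i < ∑ _i : Fin p, (m + 1) :=
              Finset.sum_lt_sum (fun i _ => by have := hbig i; omega)
                ⟨j + 1, Finset.mem_univ _, by omega⟩
          _ = p * (m + 1) := by
              rw [Finset.sum_const, Finset.card_univ, Fintype.card_fin, smul_eq_mul, mul_comm]
      have hdiv : n / p = m :=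
        Nat.div_eq_of_lt_le (by rw [mul_comm]; exact hlow.le) (by rw [mul_comm]; exact hhigh)
      constructor
      · rintro ⟨t, rfl⟩
        have h1 : m < t := Nat.lt_of_mul_lt_mul_left hlow
        have h2 : t < m + 1 := Nat.lt_of_mul_lt_mul_left hhigh
        omega
      · intro i
        have := hbnd i; have := hbig i
        rw [hdiv]
        omega
end
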